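/- arXiv:math/0204004 — 6 statements merged into one kernel-verified Lean document; each statement's English description precedes it below -/
import Mathlib

section
/- Let K be a field, L a Lie algebra over K, and A a commutative unital K-algebra. Then the center of the tensor product Lie algebra L ⊗ A equals Z(L) ⊗ A, where Z(L) is the center of L. -/
/-!
STATEMENT 0: For a field `K`, a Lie algebra `L` over `K` and a commutative unital
`K`-algebra `A`, the center of the tensor product Lie algebra `L ⊗ A`
(realized in Mathlib as `A ⊗[K] L` with `⁅a ⊗ x, b ⊗ y⁆ = (a*b) ⊗ ⁅x,y⁆`)
equals `Z(L) ⊗ A`, i.e. the image of `A ⊗ Z(L)` under the canonical inclusion.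
-/

open scoped TensorProduct

/-- The tensor product Lie algebra is a Lie algebra over the base field `K`
(by restriction of scalars from its `A`-Lie algebra structure). -/
noncomputable instance tensorLieAlgebraOverBase
    (K : Type) [Field K] (L : Type) [LieRing L] [LieAlgebra K L]
    (A : Type) [CommRing A] [Algebra K A] : LieAlgebra K (A ⊗[K] L) where
  lie_smul k x y := by
    rw [← algebraMap_smul A k y, lie_smul, algebraMap_smul]

theorem statement0
    (K : Type) [Field K] (L : Type) [LieRing L] [LieAlgebra K L]
    (A : Type) [CommRing A] [Algebra K A] :
    (LieAlgebra.center K (A ⊗[K] L) : Set (A ⊗[K] L)) =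
      Set.range (LinearMap.lTensor A
        (LieSubmodule.toSubmodule (LieAlgebra.center K L)).subtype) := by
  classical
  ext z
  simp only [SetLike.mem_coe]
  constructor
  · intro hz
    rw [LieAlgebra.center, LieModule.mem_maxTrivSubmodule] at hz
    set b := Module.Basis.ofVectorSpace K A with hb
    set ι := Module.Basis.ofVectorSpaceIndex K A
    set e : A ⊗[K] L ≃ₗ[K] (ι →₀ L) :=
      (TensorProduct.congr b.repr (LinearEquiv.refl K L)).trans
        (TensorProduct.finsuppScalarLeft K L ι) with he
    have he_tmul : ∀ (a : A) (x : L) (i : ι), e (a ⊗ₜ[K] x) i = b.repr a i • x := by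
      intro a x i
      simp [he, TensorProduct.congr, TensorProduct.finsuppScalarLeft_apply_tmul_apply]
    have hbr : ∀ (y : L) (w : A ⊗[K] L) (i : ι), e ⁅(1:A) ⊗ₜ[K] y, w⁆ i = ⁅y, e w i⁆ := by
      intro y w i
      induction w using TensorProduct.induction_on with
      | zero => simp
      | tmul a x =>
        rw [LieAlgebra.ExtendScalars.bracket_tmul, one_mul, he_tmul, he_tmul, lie_smul]
      | add u v hu hv =>
        rw [lie_add, map_add, Finsupp.add_apply, hu, hv, map_add, Finsupp.add_apply, lie_add]
    have hcent : ∀ i, e z i ∈ LieAlgebra.center K L := by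
      intro i
      rw [LieAlgebra.center, LieModule.mem_maxTrivSubmodule]
      intro y
      have := hbr y z i
      rw [hz ((1:A) ⊗ₜ[K] y)] at this
      simpa using this.symm
    have hrange : z ∈ LinearMap.range (LinearMap.lTensor A
        (LieSubmodule.toSubmodule (LieAlgebra.center K L)).subtype) := by
      have hz_eq : z = e.symm ((e z).sum Finsupp.single) := by
        rw [Finsupp.sum_single, e.symm_apply_apply]
      rw [hz_eq, Finsupp.sum, map_sum]
      apply Submodule.sum_mem
      intro i _
      have hsingle : e.symm (Finsupp.single i (e z i)) = b i ⊗ₜ[K] (e z i) := by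
        apply e.injective
        rw [e.apply_symm_apply]
        ext j
        rw [he_tmul, Module.Basis.repr_self, Finsupp.single_apply, Finsupp.single_apply]
        split <;> simp
      rw [hsingle]
      exact ⟨b i ⊗ₜ[K] ⟨e z i, hcent i⟩, rfl⟩
    exact hrange
  · rintro ⟨w, rfl⟩
    rw [LieAlgebra.center, LieModule.mem_maxTrivSubmodule]
    intro m
    induction w using TensorProduct.induction_on with
    | zero => simp
    | tmul a x =>
      rw [LinearMap.lTensor_tmul]
      induction m using TensorProduct.induction_on with
      | zero => simp
      | tmul c y =>
        rw [LieAlgebra.ExtendScalars.bracket_tmul]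
        have : ⁅y, (x : L)⁆ = 0 := (LieModule.mem_maxTrivSubmodule K L L _).mp x.2 y
        simp [this]
      | add u v hu hv => rw [add_lie, hu, hv, add_zero]
    | add u v hu hv => rw [map_add, lie_add, hu, hv, add_zero]
end

section
/- Let K be a field, L a Lie algebra over K, and A a commutative unital K-algebra. Inside the Lie algebra of derivations of L ⊗ A, the subspace {1⊗d : d ∈ Der(A)} (where 1⊗d denotes the derivation x⊗a ↦ x⊗d(a)) intersects the space of inner derivations ad(L ⊗ A) trivially: if 1⊗d = ad(w) for some w ∈ L ⊗ A, then 1⊗d = 0; in particular, if L ≠ 0 then d = 0. -/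
/-!
An inner derivation `ad w` is `A`-linear, while `1 ⊗ d` kills every `1 ⊗ x` because `d 1 = 0`;
hence `d a ⊗ x = (1 ⊗ d) (a • (1 ⊗ x)) = a • (1 ⊗ d) (1 ⊗ x) = 0`. When `L ≠ 0` it is a
faithfully flat `K`-module, so `1 ⊗ d = 0` forces `d = 0`.
-/

open scoped TensorProduct

theorem LinearMap.rTensor_eq_zero_of_map_smul {R A M : Type*} [CommSemiring R] [Semiring A]
    [Algebra R A] [AddCommMonoid M] [Module R M] (φ : A →ₗ[R] A) (hφ : φ 1 = 0)
    (hsmul : ∀ (a : A) (u : A ⊗[R] M), φ.rTensor M (a • u) = a • φ.rTensor M u) :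
    φ.rTensor M = 0 := by
  refine TensorProduct.ext' fun a x => ?_
  calc φ.rTensor M (a ⊗ₜ x) = φ.rTensor M (a • (1 : A) ⊗ₜ x) := by
        rw [TensorProduct.smul_tmul', smul_eq_mul, mul_one]
    _ = 0 := by rw [hsmul, rTensor_tmul, hφ, TensorProduct.zero_tmul, smul_zero]

theorem statement1
    (K : Type) [Field K] (L : Type) [LieRing L] [LieAlgebra K L]
    (A : Type) [CommRing A] [Algebra K A]
    (d : Derivation K A A) (w : A ⊗[K] L)
    (h : ∀ u : A ⊗[K] L, LinearMap.rTensor L (d.toLinearMap) u = ⁅w, u⁆) :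
    LinearMap.rTensor L (d.toLinearMap) = 0 ∧ (Nontrivial L → d = 0) := by
  have hzero : LinearMap.rTensor L d.toLinearMap = 0 :=
    d.toLinearMap.rTensor_eq_zero_of_map_smul d.map_one_eq_zero fun a u => by
      rw [h, h, lie_smul]
  refine ⟨hzero, fun _ => Derivation.ext fun a => ?_⟩
  have hd : d.toLinearMap = 0 := (Module.FaithfullyFlat.zero_iff_rTensor_zero K L _).mpr hzero
  exact LinearMap.congr_fun hd a
end

section
/- Let K be a field of characteristic p > 3, L a Lie algebra over K with [[L,L],L] ≠ 0 (L is not 2-step nilpotent), A a commutative unital K-algebra, φ : L × L → L an alternating bilinear map, and u ∈ A. Then the alternating bilinear map Θ on L ⊗ A defined by Θ(x⊗a, y⊗b) = φ(x,y) ⊗ abu is a 2-cocycle of L ⊗ A with coefficients in the adjoint module if and only if either φ is a 2-cocycle of L with coefficients in the adjoint module, or u = 0. -/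
/-!
On pure tensors the cocycle expression of `Θ` factors:
`dΘ(a ⊗ x, b ⊗ y, c ⊗ z) = abcu ⊗ dφ(x, y, z)`.
Hence `dφ = 0` or `u = 0` makes `dΘ` vanish on pure tensors, and so everywhere by additivity;
conversely `dΘ(1 ⊗ x, 1 ⊗ y, 1 ⊗ z) = u ⊗ dφ(x, y, z)`, and over a field `u ⊗ m = 0`
with `u ≠ 0` forces `m = 0`.
-/

open scoped TensorProduct

section Helpers

variable (K : Type) [Field K]

/-- Combine a bilinear map on `A` and a bilinear map on `L` into a bilinear map on
`A ⊗[K] L`, sending `(a ⊗ x, b ⊗ y)` to `f a b ⊗ g x y`. -/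
noncomputable def tensorBilin
    (A : Type) [AddCommGroup A] [Module K A]
    (L : Type) [AddCommGroup L] [Module K L]
    (M : Type) [AddCommGroup M] [Module K M]
    (N : Type) [AddCommGroup N] [Module K N]
    (f : A →ₗ[K] A →ₗ[K] M) (g : L →ₗ[K] L →ₗ[K] N) :
    (A ⊗[K] L) →ₗ[K] (A ⊗[K] L) →ₗ[K] (M ⊗[K] N) :=
  TensorProduct.curry
    ((TensorProduct.map (TensorProduct.lift f) (TensorProduct.lift g)).comp
      (TensorProduct.tensorTensorTensorComm K A L A L).toLinearMap)

@[simp] theorem tensorBilin_tmul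
    (A : Type) [AddCommGroup A] [Module K A]
    (L : Type) [AddCommGroup L] [Module K L]
    (M : Type) [AddCommGroup M] [Module K M]
    (N : Type) [AddCommGroup N] [Module K N]
    (f : A →ₗ[K] A →ₗ[K] M) (g : L →ₗ[K] L →ₗ[K] N)
    (a b : A) (x y : L) :
    tensorBilin K A L M N f g (a ⊗ₜ x) (b ⊗ₜ y) = f a b ⊗ₜ g x y := rfl

/-- The Chevalley–Eilenberg 2-cocycle condition, with coefficients in the adjoint
module, for an (alternating) bilinear map `φ` on a Lie algebra `L`. -/
def IsLie2Cocycle (L : Type) [LieRing L] [Module K L]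
    (φ : L →ₗ[K] L →ₗ[K] L) : Prop :=
  ∀ x y z : L,
    ⁅x, φ y z⁆ - ⁅y, φ x z⁆ + ⁅z, φ x y⁆
      - φ ⁅x, y⁆ z + φ ⁅x, z⁆ y - φ ⁅y, z⁆ x = 0

/-- The Harrison 2-cocycle condition (symmetry plus the Hochschild cocycle identity)
for a bilinear map `F` on a commutative `K`-algebra `A`. -/
def IsHarrison2Cocycle (A : Type) [CommRing A] [Algebra K A]
    (F : A →ₗ[K] A →ₗ[K] A) : Prop :=
  (∀ a b : A, F a b = F b a) ∧
    ∀ a b c : A, a * F b c - F (a * b) c + F a (b * c) - F a b * c = 0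

end Helpers

/-- The bilinear map `(a, b) ↦ a * b * u` on `A`. -/
noncomputable def mulMulBy (K : Type) [Field K] (A : Type) [CommRing A] [Algebra K A]
    (u : A) : A →ₗ[K] A →ₗ[K] A :=
  LinearMap.mk₂ K (fun a b => a * b * u)
    (by intros; ring) (by intros; simp [smul_mul_assoc])
    (by intros; ring) (by intros m n c; rw [mul_smul_comm, smul_mul_assoc])

open TensorProduct

theorem TensorProduct.eq_zero_of_tmul_eq_zero {K V W : Type*} [Field K]
    [AddCommGroup V] [Module K V] [AddCommGroup W] [Module K W] {v : V} {w : W}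
    (hv : v ≠ 0) (h : v ⊗ₜ[K] w = 0) : w = 0 := by
  obtain ⟨f, hf⟩ : ∃ f : Module.Dual K V, f v ≠ 0 := by
    by_contra! hcon
    exact hv ((Module.forall_dual_apply_eq_zero_iff K v).mp hcon)
  have hfw : f v • w = 0 := by
    simpa using congrArg ((TensorProduct.lid K W).toLinearMap ∘ₗ f.rTensor W) h
  exact (smul_eq_zero.mp hfw).resolve_left hf

section Defect

variable {K L : Type*} [CommRing K] [LieRing L] [Module K L]

def lieCoboundary (φ : L →ₗ[K] L →ₗ[K] L) (x y z : L) : L :=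
  ⁅x, φ y z⁆ - ⁅y, φ x z⁆ + ⁅z, φ x y⁆ - φ ⁅x, y⁆ z + φ ⁅x, z⁆ y - φ ⁅y, z⁆ x

variable (φ : L →ₗ[K] L →ₗ[K] L)

theorem lieCoboundary_add_left (x₁ x₂ y z : L) :
    lieCoboundary φ (x₁ + x₂) y z = lieCoboundary φ x₁ y z + lieCoboundary φ x₂ y z := by
  simp only [lieCoboundary, map_add, LinearMap.add_apply, add_lie, lie_add]
  abel

theorem lieCoboundary_add_mid (x y₁ y₂ z : L) :
    lieCoboundary φ x (y₁ + y₂) z = lieCoboundary φ x y₁ z + lieCoboundary φ x y₂ z := by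
  simp only [lieCoboundary, map_add, LinearMap.add_apply, add_lie, lie_add]
  abel

theorem lieCoboundary_add_right (x y z₁ z₂ : L) :
    lieCoboundary φ x y (z₁ + z₂) = lieCoboundary φ x y z₁ + lieCoboundary φ x y z₂ := by
  simp only [lieCoboundary, map_add, LinearMap.add_apply, add_lie, lie_add]
  abel

theorem lieCoboundary_zero_left (y z : L) : lieCoboundary φ 0 y z = 0 := by
  simp [lieCoboundary]

theorem lieCoboundary_zero_mid (x z : L) : lieCoboundary φ x 0 z = 0 := by
  simp [lieCoboundary]

theorem lieCoboundary_zero_right (x y : L) : lieCoboundary φ x y 0 = 0 := by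
  simp [lieCoboundary]

end Defect

theorem isLie2Cocycle_iff {K L : Type} [Field K] [LieRing L] [Module K L]
    (φ : L →ₗ[K] L →ₗ[K] L) :
    IsLie2Cocycle K L φ ↔ ∀ x y z, lieCoboundary φ x y z = 0 :=
  Iff.rfl

section CurrentAlgebra

variable {K : Type} [Field K] {L : Type} [LieRing L] [LieAlgebra K L]
  {A : Type} [CommRing A] [Algebra K A]

theorem isLie2Cocycle_of_tmul (Θ : A ⊗[K] L →ₗ[K] A ⊗[K] L →ₗ[K] A ⊗[K] L)
    (h : ∀ (a b c : A) (x y z : L), lieCoboundary Θ (a ⊗ₜ x) (b ⊗ₜ y) (c ⊗ₜ z) = 0) :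
    IsLie2Cocycle K (A ⊗[K] L) Θ := by
  rw [isLie2Cocycle_iff]
  intro X Y Z
  induction X using TensorProduct.induction_on with
  | zero => exact lieCoboundary_zero_left Θ Y Z
  | add X₁ X₂ h₁ h₂ => rw [lieCoboundary_add_left, h₁, h₂, add_zero]
  | tmul a x =>
    induction Y using TensorProduct.induction_on with
    | zero => exact lieCoboundary_zero_mid Θ _ Z
    | add Y₁ Y₂ h₁ h₂ => rw [lieCoboundary_add_mid, h₁, h₂, add_zero]
    | tmul b y =>
      induction Z using TensorProduct.induction_on with
      | zero => exact lieCoboundary_zero_right Θ _ _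
      | add Z₁ Z₂ h₁ h₂ => rw [lieCoboundary_add_right, h₁, h₂, add_zero]
      | tmul c z => exact h a b c x y z

theorem lieCoboundary_tensorBilin_mulMulBy_tmul (φ : L →ₗ[K] L →ₗ[K] L) (u a b c : A)
    (x y z : L) :
    lieCoboundary (tensorBilin K A L A L (mulMulBy K A u) φ) (a ⊗ₜ x) (b ⊗ₜ y) (c ⊗ₜ z) =
      (a * b * c * u) ⊗ₜ lieCoboundary φ x y z := by
  simp only [lieCoboundary, tensorBilin_tmul, mulMulBy, LinearMap.mk₂_apply,
    LieAlgebra.ExtendScalars.bracket_tmul, tmul_sub, tmul_add]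
  ring_nf

end CurrentAlgebra

theorem statement3_general
    (K : Type) [Field K]
    (L : Type) [LieRing L] [LieAlgebra K L]
    (A : Type) [CommRing A] [Algebra K A]
    (φ : L →ₗ[K] L →ₗ[K] L) (u : A) :
    IsLie2Cocycle K (A ⊗[K] L) (tensorBilin K A L A L (mulMulBy K A u) φ) ↔
      (IsLie2Cocycle K L φ ∨ u = 0) := by
  constructor
  · refine fun h => or_iff_not_imp_right.mpr fun hu => (isLie2Cocycle_iff φ).mpr fun x y z => ?_
    have h₁ := (isLie2Cocycle_iff _).mp h (1 ⊗ₜ x) (1 ⊗ₜ y) (1 ⊗ₜ z)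
    rw [lieCoboundary_tensorBilin_mulMulBy_tmul, one_mul, one_mul, one_mul] at h₁
    exact eq_zero_of_tmul_eq_zero hu h₁
  · rintro (hφ | rfl) <;> refine isLie2Cocycle_of_tmul _ fun a b c x y z => ?_ <;>
      rw [lieCoboundary_tensorBilin_mulMulBy_tmul]
    · rw [(isLie2Cocycle_iff φ).mp hφ x y z, tmul_zero]
    · rw [mul_zero, zero_tmul]

theorem statement3
    (K : Type) [Field K] (p : ℕ) [CharP K p] (hp : 3 < p)
    (L : Type) [LieRing L] [LieAlgebra K L]
    (A : Type) [CommRing A] [Algebra K A]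
    (hL : ¬ ∀ x y z : L, ⁅⁅x, y⁆, z⁆ = 0)
    (φ : L →ₗ[K] L →ₗ[K] L) (hφ : ∀ x : L, φ x x = 0) (u : A) :
    IsLie2Cocycle K (A ⊗[K] L) (tensorBilin K A L A L (mulMulBy K A u) φ) ↔
      (IsLie2Cocycle K L φ ∨ u = 0) :=
  statement3_general K L A φ u
end

section
/- Let K be a field of characteristic p > 3, L a Lie algebra over K with [[L,L],L] ≠ 0 (L is not 2-step nilpotent), A a commutative unital K-algebra, and F : A × A → A a symmetric bilinear map. Then the alternating bilinear map Υ_F on L ⊗ A defined by Υ_F(x⊗a, y⊗b) = [x,y] ⊗ F(a,b) is a 2-cocycle of L ⊗ A with coefficients in the adjoint module if and only if F is a Harrison 2-cocycle, i.e. aF(b,c) − F(ab,c) + F(a,bc) − F(a,b)c = 0 for all a,b,c ∈ A. -/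
/-!
STATEMENT 4: char K = p > 3, L a Lie algebra with [[L,L],L] ≠ 0, A a commutative
unital K-algebra, F a symmetric bilinear map on A.  The alternating bilinear map
Υ_F(x⊗a, y⊗b) = [x,y] ⊗ F(a,b) is a 2-cocycle of L ⊗ A (adjoint coefficients)
iff F is a Harrison 2-cocycle.  (L ⊗ A is realized as A ⊗[K] L.)
-/


open scoped TensorProduct

/-- The Lie bracket of `L` as a bilinear map. -/
noncomputable def brktBilin (K : Type) [Field K] (L : Type) [LieRing L] [LieAlgebra K L] :
    L →ₗ[K] L →ₗ[K] L :=
  LinearMap.mk₂ K (fun x y => ⁅x, y⁆) add_lie smul_lie lie_add lie_smul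

@[simp] theorem brktBilin_apply (K : Type) [Field K] (L : Type) [LieRing L] [LieAlgebra K L]
    (x y : L) : brktBilin K L x y = ⁅x, y⁆ := rfl

/- auxiliary: the cocycle expression and its additivity -/
section Cexpr
variable (K : Type) [Field K] (M : Type) [LieRing M] [Module K M]

def cexpr (φ : M →ₗ[K] M →ₗ[K] M) (u v w : M) : M :=
  ⁅u, φ v w⁆ - ⁅v, φ u w⁆ + ⁅w, φ u v⁆ - φ ⁅u, v⁆ w + φ ⁅u, w⁆ v - φ ⁅v, w⁆ u

variable (φ : M →ₗ[K] M →ₗ[K] M)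

theorem cexpr_add1 (u u' v w : M) :
    cexpr K M φ (u + u') v w = cexpr K M φ u v w + cexpr K M φ u' v w := by
  simp only [cexpr, add_lie, lie_add, map_add, LinearMap.add_apply]
  abel

theorem cexpr_add2 (u v v' w : M) :
    cexpr K M φ u (v + v') w = cexpr K M φ u v w + cexpr K M φ u v' w := by
  simp only [cexpr, add_lie, lie_add, map_add, LinearMap.add_apply]
  abel

theorem cexpr_add3 (u v w w' : M) :
    cexpr K M φ u v (w + w') = cexpr K M φ u v w + cexpr K M φ u v w' := by
  simp only [cexpr, add_lie, lie_add, map_add, LinearMap.add_apply]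
  abel

theorem cexpr_zero1 (v w : M) : cexpr K M φ 0 v w = 0 := by
  simp [cexpr]

theorem cexpr_zero2 (u w : M) : cexpr K M φ u 0 w = 0 := by
  simp [cexpr]

theorem cexpr_zero3 (u v : M) : cexpr K M φ u v 0 = 0 := by
  simp [cexpr]

end Cexpr

theorem exists_ne_zero_lie (K : Type) [Field K] (p : ℕ) [CharP K p] (hp : 3 < p)
    (L : Type) [LieRing L] [LieAlgebra K L]
    (hL : ¬ ∀ x y z : L, ⁅⁅x, y⁆, z⁆ = 0) :
    ∃ x y : L, ⁅⁅x, y⁆, y⁆ ≠ 0 := by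
  by_contra h
  push_neg at h
  apply hL
  have hpol : ∀ x y z : L, ⁅⁅x, z⁆, y⁆ = - ⁅⁅x, y⁆, z⁆ := by
    intro x y z
    have h2 := h x (y + z)
    simp only [lie_add, add_lie, h x y, h x z, zero_add, add_zero] at h2
    exact eq_neg_of_add_eq_zero_left h2
  intro x y z
  have hs : ∀ u v w : L, ⁅⁅u, v⁆, w⁆ = -⁅⁅v, u⁆, w⁆ := by
    intro u v w; rw [← lie_skew u v]; simp
  have ha3 : ⁅⁅z, x⁆, y⁆ = ⁅⁅x, y⁆, z⁆ := by
    have h1 := hpol x y z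
    rw [hs x z y] at h1
    exact neg_injective h1
  have ha2 : ⁅⁅y, z⁆, x⁆ = ⁅⁅x, y⁆, z⁆ := by
    have h1 := hpol y z x
    rw [hs y x z] at h1
    exact (neg_injective h1).symm
  have jac : ⁅⁅x, y⁆, z⁆ + ⁅⁅y, z⁆, x⁆ + ⁅⁅z, x⁆, y⁆ = 0 := by
    have := lie_jacobi z y x
    rw [← lie_skew ⁅x, y⁆ z, ← lie_skew ⁅y, z⁆ x, ← lie_skew ⁅z, x⁆ y,
      ← lie_skew x y, ← lie_skew y z, ← lie_skew z x]
    simp only [neg_neg, lie_neg, neg_lie]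
    linear_combination (norm := abel) this
  rw [ha2, ha3] at jac
  have h3 : (3 : K) • ⁅⁅x, y⁆, z⁆ = 0 := by rw [← jac]; module
  have h3ne : (3 : K) ≠ 0 := by
    have : ((3 : ℕ) : K) ≠ 0 := by
      rw [Ne, CharP.cast_eq_zero_iff K p]
      intro hdvd
      have := Nat.le_of_dvd (by norm_num) hdvd
      omega
    simpa using this
  exact (smul_eq_zero.mp h3).resolve_left h3ne

theorem tmul_right_cancel (K : Type) [Field K]
    (A : Type) [AddCommGroup A] [Module K A]
    (L : Type) [AddCommGroup L] [Module K L]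
    (g : A) (w : L) (hw : w ≠ 0) (h : g ⊗ₜ[K] w = (0 : A ⊗[K] L)) : g = 0 := by
  obtain ⟨f, hf⟩ : ∃ f : Module.Dual K L, f w ≠ 0 := by
    by_contra hc
    push_neg at hc
    exact hw ((Module.forall_dual_apply_eq_zero_iff K w).mp hc)
  have := congrArg ((TensorProduct.rid K A).toLinearMap ∘ₗ TensorProduct.map LinearMap.id f) h
  simp only [LinearMap.comp_apply, TensorProduct.map_tmul, LinearMap.id_apply, map_zero,
    LinearEquiv.coe_coe, TensorProduct.rid_tmul] at this
  exact (smul_eq_zero.mp this).resolve_left hf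

theorem statement4
    (K : Type) [Field K] (p : ℕ) [CharP K p] (hp : 3 < p)
    (L : Type) [LieRing L] [LieAlgebra K L]
    (A : Type) [CommRing A] [Algebra K A]
    (hL : ¬ ∀ x y z : L, ⁅⁅x, y⁆, z⁆ = 0)
    (F : A →ₗ[K] A →ₗ[K] A) (hF : ∀ a b : A, F a b = F b a) :
    IsLie2Cocycle K (A ⊗[K] L) (tensorBilin K A L A L F (brktBilin K L)) ↔
      (∀ a b c : A, a * F b c - F (a * b) c + F a (b * c) - F a b * c = 0) := by
  set φ := tensorBilin K A L A L F (brktBilin K L) with hφ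
  constructor
  · intro H a b c
    obtain ⟨x, y, hw⟩ := exists_ne_zero_lie K p hp L hL
    have h0 := H (b ⊗ₜ[K] x) (a ⊗ₜ[K] y) (c ⊗ₜ[K] y)
    have key : ⁅b ⊗ₜ[K] x, φ (a ⊗ₜ[K] y) (c ⊗ₜ[K] y)⁆ - ⁅a ⊗ₜ[K] y, φ (b ⊗ₜ[K] x) (c ⊗ₜ[K] y)⁆
        + ⁅c ⊗ₜ[K] y, φ (b ⊗ₜ[K] x) (a ⊗ₜ[K] y)⁆ - φ ⁅b ⊗ₜ[K] x, a ⊗ₜ[K] y⁆ (c ⊗ₜ[K] y)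
        + φ ⁅b ⊗ₜ[K] x, c ⊗ₜ[K] y⁆ (a ⊗ₜ[K] y) - φ ⁅a ⊗ₜ[K] y, c ⊗ₜ[K] y⁆ (b ⊗ₜ[K] x)
        = (a * F b c - F (a * b) c + F a (b * c) - F a b * c) ⊗ₜ[K] ⁅⁅x, y⁆, y⁆ := by
      have hyy : ⁅y, ⁅x, y⁆⁆ = -⁅⁅x, y⁆, y⁆ := by rw [← lie_skew ⁅x,y⁆ y, neg_neg]
      simp only [hφ, tensorBilin_tmul, LieAlgebra.ExtendScalars.bracket_tmul, brktBilin_apply,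
        lie_self, TensorProduct.tmul_zero, lie_zero, map_zero, LinearMap.zero_apply, hyy,
        TensorProduct.tmul_neg]
      rw [hF a (b * c), show F a b * c = c * F b a by rw [hF a b, mul_comm],
        show F (b * a) c = F (a * b) c by rw [mul_comm b a]]
      simp only [TensorProduct.sub_tmul, TensorProduct.add_tmul]
      abel
    have hg := key.symm.trans h0
    exact tmul_right_cancel K A L _ _ hw hg
  · intro hHar
    intro u v w
    show cexpr K (A ⊗[K] L) φ u v w = 0
    induction u using TensorProduct.induction_on with
    | zero => exact cexpr_zero1 K _ φ v w
    | add u1 u2 h1 h2 => rw [cexpr_add1, h1, h2, add_zero]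
    | tmul a x =>
      induction v using TensorProduct.induction_on with
      | zero => exact cexpr_zero2 K _ φ _ w
      | add v1 v2 h1 h2 => rw [cexpr_add2, h1, h2, add_zero]
      | tmul b y =>
        induction w using TensorProduct.induction_on with
        | zero => exact cexpr_zero3 K _ φ _ _
        | add w1 w2 h1 h2 => rw [cexpr_add3, h1, h2, add_zero]
        | tmul c z =>
          have hP : a * F b c - F (a * b) c + F (b * c) a - c * F a b = 0 := by
            have h1 := hHar a b c
            rw [hF a (b * c), mul_comm (F a b) c] at h1
            exact h1
          have hQ : a * F b c - b * F a c - F (a * c) b + F (b * c) a = 0 := by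
            have h1 := hHar a b c
            have h2 := hHar b a c
            rw [hF a (b * c)] at h1
            rw [mul_comm b a, hF b (a * c), hF b a] at h2
            linear_combination h1 - h2
          have e1 : ⁅x, ⁅y, z⁆⁆ = ⁅⁅x, y⁆, z⁆ + ⁅y, ⁅x, z⁆⁆ := leibniz_lie x y z
          have e2 : ⁅z, ⁅x, y⁆⁆ = -⁅⁅x, y⁆, z⁆ := by rw [← lie_skew ⁅x,y⁆ z, neg_neg]
          have e3 : ⁅⁅x, z⁆, y⁆ = -⁅y, ⁅x, z⁆⁆ := by rw [← lie_skew y ⁅x,z⁆, neg_neg]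
          have e4 : ⁅⁅y, z⁆, x⁆ = -(⁅⁅x, y⁆, z⁆ + ⁅y, ⁅x, z⁆⁆) := by
            rw [show ⁅⁅y, z⁆, x⁆ = -⁅x, ⁅y, z⁆⁆ by rw [← lie_skew x ⁅y,z⁆, neg_neg], e1]
          simp only [cexpr, hφ, tensorBilin_tmul, LieAlgebra.ExtendScalars.bracket_tmul,
            brktBilin_apply, e1, e2, e3, e4, TensorProduct.tmul_add, TensorProduct.tmul_neg]
          rw [show (0 : A ⊗[K] L) =
              (a * F b c - F (a * b) c + F (b * c) a - c * F a b) ⊗ₜ[K] ⁅⁅x, y⁆, z⁆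
                + (a * F b c - b * F a c - F (a * c) b + F (b * c) a) ⊗ₜ[K] ⁅y, ⁅x, z⁆⁆ by
            rw [hP, hQ]; simp]
          simp only [TensorProduct.sub_tmul, TensorProduct.add_tmul]
          abel
end

section
/- Let K be a field of characteristic p > 3. For integers −1 ≤ i, j ≤ p−2 define λ_{ij} ∈ K by λ_{ij} = Σ_{k=1}^{i} binom(i+j+1−k, j+1)·(k+2)·(k(k+1))^{−1} (binomial coefficients reduced mod p; the sum is empty for i ≤ 0), and let N_{ij} ∈ K be the image of binom(i+j+1, j) − binom(i+j+1, i). Then: (a) for all integers j, k ≥ 1 with j + k = p − 1, λ_{j−1,k} + λ_{j,k−1} = (−1)^k (2k+1)·(k(k+1))^{−1}; (b) for all integers j, k ≥ 1 with j + k = p − 1, λ_{j,k−1} − λ_{k,j−1} = 2(−1)^k λ_{j,−1} + 2(−1)^{k+1} λ_{k,−1} + (−1)^{k+1}(2k+1)·(k(k+1))^{−1}; (c) for all integers i, j, k ≥ 0 with i + j + k < p − 1, N_{ij}λ_{i+j,k} − N_{jk}λ_{i,j+k} + N_{ik}λ_{j,i+k} + N_{j+k,i}λ_{jk} − N_{i+k,j}λ_{ik}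 = 0. -/
/-- Binomial coefficient `binom a b` of integers, reduced into `K`
(zero when either argument is negative). -/
def chK (K : Type) [Field K] (a b : ℤ) : K :=
  if a < 0 ∨ b < 0 then 0 else ((a.toNat.choose b.toNat : ℕ) : K)

/-- The structure constants `N_{ij} = binom (i+j+1) j - binom (i+j+1) i`,
as elements of `K`. -/
def wittN (K : Type) [Field K] (i j : ℤ) : K :=
  chK K (i + j + 1) j - chK K (i + j + 1) i

/-- `λ_{ij} = Σ_{k=1}^{i} binom(i+j+1−k, j+1) · (k+2) · (k(k+1))⁻¹ ∈ K`. -/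
noncomputable def lamK (K : Type) [Field K] (i j : ℤ) : K :=
  ∑ k ∈ Finset.Icc (1 : ℤ) i,
    chK K (i + j + 1 - k) (j + 1) * ((k : K) + 2) * ((k : K) * ((k : K) + 1))⁻¹

/-!
Split the weight as `(m+2)/(m(m+1)) = 2/m - 1/(m+1)`. Pascal's rule gives
`∑_{m=1}^{n} C(n-m, r)/m = C(n, r) (H_n - H_r)` as soon as `1, …, n` are invertible in `K`
(stated as `(n ! : K) ≠ 0`), and with it the closed forms `λ_{a,-1} = H_a + 1 - 1/(a+1)` and,
for `n = a + b + 1`, `λ_{ab} = (C(n, b+1) - C(n, b)) (H_n - H_{b+1}) + C(n, b+1) - C(n, b)/(b+1)`.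

For (a) and (b), `n = p - 1`, where `C(p-1, c) = (-1)^c` and `H_{p-1} = 0`. For (c), put
`G(a, b) = (a+b+1)!/((a+1)!(b+1)!)`; then `N_{ab} = (b-a) G(a,b)` and
`λ_{ab} = (a-b) G(a,b) (H_{a+b+1} - H_{b+1}) + a G(a,b)`. Each of the five products in (c) is a
multiple of `(i+j+k+1)!/((i+1)!(j+1)!(k+1)!)`, and what is left is a polynomial identity in
`i, j, k` and four harmonic numbers.
-/

open Finset Nat

namespace WittLambda

section Harmonic

variable (K : Type*) [Field K]

def harm (n : ℕ) : K := ∑ m ∈ Icc 1 n, (m : K)⁻¹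

def chooseInvSum (n r : ℕ) : K := ∑ m ∈ Icc 1 n, ((n - m).choose r : K) * (m : K)⁻¹

variable {K}

lemma harm_succ (n : ℕ) : harm K (n + 1) = harm K n + ((n : K) + 1)⁻¹ := by
  rw [harm, sum_Icc_succ_top (by omega), cast_succ]
  rfl

lemma chooseInvSum_zero_right (n : ℕ) : chooseInvSum K n 0 = harm K n := by
  simp [chooseInvSum, harm]

lemma chooseInvSum_succ_succ (n r : ℕ) :
    chooseInvSum K (n + 1) (r + 1) = chooseInvSum K n (r + 1) + chooseInvSum K n r := by
  rw [chooseInvSum, sum_Icc_succ_top (by omega), Nat.sub_self, choose_zero_succ, cast_zero,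
    zero_mul, add_zero, chooseInvSum, chooseInvSum, ← sum_add_distrib]
  refine sum_congr rfl fun m hm => ?_
  rw [mem_Icc] at hm
  rw [show n + 1 - m = n - m + 1 by omega, choose_succ_succ', cast_add, add_mul, add_comm]

lemma cast_factorial_ne_zero_of_le {n m : ℕ} (h : (n ! : K) ≠ 0) (hm : m ≤ n) :
    (m ! : K) ≠ 0 := by
  obtain ⟨c, hc⟩ := factorial_dvd_factorial hm
  exact left_ne_zero_of_mul (by rwa [hc, cast_mul] at h)

lemma cast_ne_zero_of_cast_factorial_ne_zero {n m : ℕ} (h : (n ! : K) ≠ 0) (h0 : 0 < m)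
    (hm : m ≤ n) : (m : K) ≠ 0 := by
  obtain ⟨c, hc⟩ := dvd_factorial h0 hm
  exact left_ne_zero_of_mul (by rwa [hc, cast_mul] at h)

lemma chooseInvSum_eq {n : ℕ} (h : (n ! : K) ≠ 0) (r : ℕ) :
    chooseInvSum K n r = n.choose r * (harm K n - harm K r) := by
  induction n generalizing r with
  | zero => cases r <;> simp [chooseInvSum, harm]
  | succ n ih =>
    have h' : (n ! : K) ≠ 0 := cast_factorial_ne_zero_of_le h n.le_succ
    cases r with
    | zero => simp [chooseInvSum_zero_right, harm]
    | succ r =>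
      have key : (n.choose r : K) * ((r : K) + 1)⁻¹
          = (n + 1).choose (r + 1) * ((n : K) + 1)⁻¹ := by
        rcases le_or_gt r n with hr | hr
        · have hr1 : ((r : K) + 1) ≠ 0 := by
            exact_mod_cast cast_ne_zero_of_cast_factorial_ne_zero h r.succ_pos (by omega)
          have hn1 : ((n : K) + 1) ≠ 0 := by
            exact_mod_cast cast_ne_zero_of_cast_factorial_ne_zero h n.succ_pos le_rfl
          have e : ((n : K) + 1) * n.choose r = (n + 1).choose (r + 1) * ((r : K) + 1) := by
            exact_mod_cast congrArg (Nat.cast (R := K)) (add_one_mul_choose_eq n r)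
          field_simp
          linear_combination e
        · simp [choose_eq_zero_of_lt hr, choose_eq_zero_of_lt (by omega : n + 1 < r + 1)]
      have pascal : ((n + 1).choose (r + 1) : K) = n.choose r + n.choose (r + 1) := by
        exact_mod_cast congrArg (Nat.cast (R := K)) (choose_succ_succ' n r)
      rw [chooseInvSum_succ_succ, ih h', ih h', harm_succ, harm_succ]
      linear_combination key - (harm K n - harm K r - ((r : K) + 1)⁻¹) * pascal

lemma sum_choose_mul_inv_add_one (n r : ℕ) :
    ∑ m ∈ Icc 1 n, ((n - m).choose r : K) * ((m : K) + 1)⁻¹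
      = chooseInvSum K (n + 1) r - n.choose r := by
  rw [chooseInvSum, ← sum_Ioc_add_eq_sum_Icc (show 1 ≤ n + 1 by omega),
    ← Icc_add_one_left_eq_Ioc, ← map_add_right_Icc 1 n 1, sum_map]
  simp

end Harmonic

section CharP

variable {K : Type*} [Field K] {p : ℕ} [CharP K p]

lemma cast_ne_zero_of_pos_of_lt {m : ℕ} (h0 : 0 < m) (hm : m < p) : (m : K) ≠ 0 := by
  rw [Ne, CharP.cast_eq_zero_iff K p]
  exact fun h => absurd (Nat.le_of_dvd h0 h) (by omega)

lemma cast_add_one_ne_zero_of_lt {m : ℕ} (hm : m + 1 < p) : (m : K) + 1 ≠ 0 := by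
  exact_mod_cast cast_ne_zero_of_pos_of_lt (K := K) m.succ_pos hm

lemma cast_factorial_ne_zero_of_lt (hp : p.Prime) {n : ℕ} (hn : n < p) : (n ! : K) ≠ 0 := by
  rw [Ne, CharP.cast_eq_zero_iff K p, hp.dvd_factorial]
  omega

/-- Pairing `m` with `p - m ≡ -m` shows `H_{p-1} = -H_{p-1}`. -/
lemma harm_pred_eq_zero (hp : p.Prime) (hp2 : p ≠ 2) : harm K (p - 1) = 0 := by
  have h2 : (2 : K) ≠ 0 := by
    exact_mod_cast cast_ne_zero_of_pos_of_lt (K := K) (p := p) two_pos (hp.two_le.lt_of_ne' hp2)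
  have hneg : harm K (p - 1) = -harm K (p - 1) := by
    rw [harm, ← sum_neg_distrib]
    refine sum_nbij' (p - ·) (p - ·) ?_ ?_ ?_ ?_ ?_ <;> intro m hm <;>
      simp only [mem_Icc] at hm ⊢
    · omega
    · omega
    · omega
    · omega
    · rw [cast_sub (by omega), CharP.cast_eq_zero K p, zero_sub, inv_neg, neg_neg]
  exact (mul_eq_zero.1 (by linear_combination hneg : (2 : K) * harm K (p - 1) = 0)).resolve_left h2

lemma cast_choose_pred (hp : p.Prime) {c : ℕ} (hc : c ≤ p - 1) :
    ((p - 1).choose c : K) = (-1) ^ c := by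
  induction c with
  | zero => simp
  | succ c ih =>
    have hpascal : (p - 1).choose c + (p - 1).choose (c + 1) = p.choose (c + 1) := by
      rw [← choose_succ_succ', Nat.sub_add_cancel hp.one_le]
    have hdvd : ((p.choose (c + 1) : ℕ) : K) = 0 :=
      (CharP.cast_eq_zero_iff K p _).2 (hp.dvd_choose_self (by omega) (by omega))
    rw [← hpascal, cast_add, ih (by omega)] at hdvd
    linear_combination hdvd

end CharP

section Lambda

variable {K : Type} [Field K]

lemma chK_natCast (n r : ℕ) : chK K n r = n.choose r := by
  simp [chK]

lemma map_castEmbedding_Icc (a b : ℕ) : (Icc a b).map castEmbedding = Icc (a : ℤ) b := by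
  ext x
  simp only [mem_map, mem_Icc, castEmbedding_apply]
  constructor
  · rintro ⟨m, hm, rfl⟩
    omega
  · intro hx
    exact ⟨x.toNat, by omega, by omega⟩

lemma lamK_natCast_sub_one (a r : ℕ) :
    lamK K a ((r : ℤ) - 1) = ∑ m ∈ Icc 1 a,
      ((a + r - m).choose r : K) * (((m : K) + 2) * ((m : K) * ((m : K) + 1))⁻¹) := by
  rw [lamK, show Icc (1 : ℤ) a = (Icc 1 a).map castEmbedding by
    rw [map_castEmbedding_Icc, cast_one], sum_map]
  refine sum_congr rfl fun m hm => ?_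
  rw [mem_Icc] at hm
  have harg : (a : ℤ) + ((r : ℤ) - 1) + 1 - (m : ℤ) = ((a + r - m : ℕ) : ℤ) := by omega
  rw [castEmbedding_apply, harg, sub_add_cancel, chK_natCast, Int.cast_natCast, mul_assoc]

lemma add_two_mul_inv_mul_add_one {x : K} (hx : x ≠ 0) (hx1 : x + 1 ≠ 0) :
    (x + 2) * (x * (x + 1))⁻¹ = 2 * x⁻¹ - (x + 1)⁻¹ := by
  field_simp
  ring

lemma lamK_natCast_sub_one_eq {a r : ℕ} (h : ((a + r)! : K) ≠ 0) (ha : ((a + 1)! : K) ≠ 0) :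
    lamK K a ((r : ℤ) - 1)
      = 2 * chooseInvSum K (a + r) r - chooseInvSum K (a + r + 1) r + (a + r).choose r := by
  calc lamK K a ((r : ℤ) - 1)
      = ∑ m ∈ Icc 1 (a + r),
          ((a + r - m).choose r : K) * (2 * (m : K)⁻¹ - ((m : K) + 1)⁻¹) := by
        rw [lamK_natCast_sub_one]
        refine sum_subset_zero_on_sdiff (Icc_subset_Icc_right (by omega)) ?_ ?_
        · intro m hm
          simp only [mem_sdiff, mem_Icc] at hm
          rw [choose_eq_zero_of_lt (by omega), cast_zero, zero_mul]
        · intro m hm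
          rw [mem_Icc] at hm
          have hm1 : (m : K) + 1 ≠ 0 := by
            exact_mod_cast cast_ne_zero_of_cast_factorial_ne_zero ha m.succ_pos (by omega)
          rw [add_two_mul_inv_mul_add_one
            (cast_ne_zero_of_cast_factorial_ne_zero h (by omega) (by omega)) hm1]
    _ = 2 * chooseInvSum K (a + r) r
          - ∑ m ∈ Icc 1 (a + r), ((a + r - m).choose r : K) * ((m : K) + 1)⁻¹ := by
        rw [chooseInvSum, mul_sum, ← sum_sub_distrib]
        exact sum_congr rfl fun m _ => by ring
    _ = _ := by
        rw [sum_choose_mul_inv_add_one]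
        ring

lemma lamK_natCast_neg_one {a : ℕ} (h : ((a + 1)! : K) ≠ 0) :
    lamK K a (-1) = harm K a + 1 - ((a : K) + 1)⁻¹ := by
  have := lamK_natCast_sub_one_eq (K := K) (a := a) (r := 0)
    (cast_factorial_ne_zero_of_le h a.le_succ) h
  rw [cast_zero, zero_sub] at this
  rw [this, chooseInvSum_zero_right, chooseInvSum_zero_right, add_zero, harm_succ,
    choose_zero_right, cast_one]
  ring

lemma lamK_natCast_eq {a b : ℕ} (h : ((a + b + 1)! : K) ≠ 0) :
    lamK K a b = (((a + b + 1).choose (b + 1) : K) - (a + b + 1).choose b)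
        * (harm K (a + b + 1) - harm K (b + 1))
      + (a + b + 1).choose (b + 1) - (a + b + 1).choose b * ((b : K) + 1)⁻¹ := by
  have := lamK_natCast_sub_one_eq (K := K) (a := a) (r := b + 1) (by rwa [← add_assoc])
    (cast_factorial_ne_zero_of_le h (by omega))
  rw [cast_succ, add_sub_cancel_right, ← add_assoc, chooseInvSum_succ_succ (a + b + 1) b,
    chooseInvSum_eq h, chooseInvSum_eq h] at this
  rw [this, harm_succ b]
  ring

end Lambda

section TopDegree

variable {K : Type} [Field K] {p : ℕ} [CharP K p]

lemma lamK_natCast_of_add_eq_pred (hp : p.Prime) (hp2 : p ≠ 2) {a b : ℕ}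
    (hab : a + b + 1 = p - 1) :
    lamK K a b = (-1) ^ (b + 1) * (1 + ((b : K) + 1)⁻¹ - 2 * harm K (b + 1)) := by
  rw [lamK_natCast_eq (cast_factorial_ne_zero_of_lt hp (by omega)), hab, harm_pred_eq_zero hp hp2,
    cast_choose_pred hp (by omega), cast_choose_pred hp (by omega)]
  ring

lemma lamK_sub_one_add_lamK_sub_one (hp : p.Prime) (hp2 : p ≠ 2) (j k : ℤ) (hj : 1 ≤ j)
    (hk : 1 ≤ k) (hjk : j + k = (p : ℤ) - 1) :
    lamK K (j - 1) k + lamK K j (k - 1) =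
      (-1 : K) ^ k * (2 * (k : K) + 1) * ((k : K) * ((k : K) + 1))⁻¹ := by
  obtain ⟨a, rfl⟩ : ∃ a : ℕ, j = ((a + 1 : ℕ) : ℤ) := ⟨(j - 1).toNat, by omega⟩
  obtain ⟨b, rfl⟩ : ∃ b : ℕ, k = ((b + 1 : ℕ) : ℤ) := ⟨(k - 1).toNat, by omega⟩
  have hb1 : (b : K) + 1 ≠ 0 := cast_add_one_ne_zero_of_lt (p := p) (by omega)
  have hb2 : (b : K) + 1 + 1 ≠ 0 := by
    exact_mod_cast cast_add_one_ne_zero_of_lt (K := K) (p := p) (m := b + 1) (by omega)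
  rw [show ((a + 1 : ℕ) : ℤ) - 1 = a by push_cast; ring,
    show ((b + 1 : ℕ) : ℤ) - 1 = b by push_cast; ring,
    lamK_natCast_of_add_eq_pred hp hp2 (by omega), lamK_natCast_of_add_eq_pred hp hp2 (by omega),
    zpow_natCast, Int.cast_natCast, harm_succ (b + 1)]
  push_cast
  field_simp
  ring

lemma lamK_sub_one_sub_lamK_sub_one (hp : p.Prime) (hp2 : p ≠ 2) (j k : ℤ) (hj : 1 ≤ j)
    (hk : 1 ≤ k) (hjk : j + k = (p : ℤ) - 1) :
    lamK K j (k - 1) - lamK K k (j - 1) =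
      2 * (-1 : K) ^ k * lamK K j (-1) + 2 * (-1 : K) ^ (k + 1) * lamK K k (-1)
        + (-1 : K) ^ (k + 1) * (2 * (k : K) + 1) * ((k : K) * ((k : K) + 1))⁻¹ := by
  obtain ⟨a, rfl⟩ : ∃ a : ℕ, j = ((a + 1 : ℕ) : ℤ) := ⟨(j - 1).toNat, by omega⟩
  obtain ⟨b, rfl⟩ : ∃ b : ℕ, k = ((b + 1 : ℕ) : ℤ) := ⟨(k - 1).toNat, by omega⟩
  have hsign : (-1 : K) ^ (a + 1) = (-1) ^ (b + 1) := by
    obtain ⟨t, ht⟩ := hp.odd_of_ne_two hp2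
    refine neg_one_pow_congr ?_
    rw [Nat.even_add_one, Nat.even_add_one, not_iff_not]
    exact Nat.even_add.1 ⟨t - 1, by omega⟩
  have ha : (a : K) + 1 = -((b : K) + 1 + 1) := by
    have := CharP.cast_eq_zero K p
    rw [show p = a + b + 3 by omega] at this
    push_cast at this
    linear_combination this
  have hb1 : (b : K) + 1 ≠ 0 := cast_add_one_ne_zero_of_lt (p := p) (by omega)
  have hb2 : (b : K) + 1 + 1 ≠ 0 := by
    exact_mod_cast cast_add_one_ne_zero_of_lt (K := K) (p := p) (m := b + 1) (by omega)
  rw [show ((a + 1 : ℕ) : ℤ) - 1 = a by push_cast; ring,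
    show ((b + 1 : ℕ) : ℤ) - 1 = b by push_cast; ring,
    show ((b + 1 : ℕ) : ℤ) + 1 = ((b + 2 : ℕ) : ℤ) by push_cast; ring,
    lamK_natCast_of_add_eq_pred hp hp2 (by omega), lamK_natCast_of_add_eq_pred hp hp2 (by omega),
    lamK_natCast_neg_one (cast_factorial_ne_zero_of_lt hp (by omega)),
    lamK_natCast_neg_one (cast_factorial_ne_zero_of_lt hp (by omega)),
    zpow_natCast, zpow_natCast, Int.cast_natCast, hsign, harm_succ a, harm_succ b]
  push_cast
  rw [ha, show -((b : K) + 1 + 1) + 1 = -((b : K) + 1) by ring, inv_neg, inv_neg]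
  field_simp
  ring

end TopDegree

section Cocycle

def factorialRatio (K : Type*) [Field K] (a b : ℕ) : K :=
  ((a + b + 1)! : K) / ((a + 1)! * (b + 1)!)

variable {K : Type} [Field K]

lemma factorialRatio_comm (a b : ℕ) : factorialRatio K a b = factorialRatio K b a := by
  rw [factorialRatio, factorialRatio, add_comm a b, mul_comm]

lemma cast_choose_eq_mul_factorialRatio {a b : ℕ} (h : ((a + b + 1)! : K) ≠ 0) :
    ((a + b + 1).choose b : K) = (b + 1) * factorialRatio K a b := by
  have e : ((a + b + 1).choose b : K) * b ! * (a + 1)! = (a + b + 1)! := by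
    have := choose_mul_factorial_mul_factorial (n := a + b + 1) (k := b) (by omega)
    rw [show a + b + 1 - b = a + 1 by omega] at this
    exact_mod_cast congrArg (Nat.cast (R := K)) this
  have hb : (b ! : K) ≠ 0 := cast_factorial_ne_zero_of_le h (by omega)
  have ha : ((a + 1)! : K) ≠ 0 := cast_factorial_ne_zero_of_le h (by omega)
  have hb1 : ((b : K) + 1) ≠ 0 := by
    exact_mod_cast cast_ne_zero_of_cast_factorial_ne_zero h b.succ_pos (by omega)
  rw [factorialRatio, ← e, factorial_succ b]
  push_cast
  field_simp

lemma cast_choose_left_eq_mul_factorialRatio {a b : ℕ} (h : ((a + b + 1)! : K) ≠ 0) :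
    ((a + b + 1).choose a : K) = (a + 1) * factorialRatio K a b := by
  have := cast_choose_eq_mul_factorialRatio (K := K) (a := b) (b := a) (by rwa [add_comm b a])
  rwa [add_comm b a, factorialRatio_comm] at this

lemma wittN_natCast_eq {a b : ℕ} (h : ((a + b + 1)! : K) ≠ 0) :
    wittN K a b = ((b : K) - a) * factorialRatio K a b := by
  rw [wittN, show (a : ℤ) + b + 1 = ((a + b + 1 : ℕ) : ℤ) by push_cast; ring, chK_natCast,
    chK_natCast, cast_choose_eq_mul_factorialRatio h, cast_choose_left_eq_mul_factorialRatio h]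
  ring

lemma lamK_natCast_eq_factorialRatio {a b : ℕ} (h : ((a + b + 1)! : K) ≠ 0) :
    lamK K a b = ((a : K) - b) * factorialRatio K a b * (harm K (a + b + 1) - harm K (b + 1))
      + a * factorialRatio K a b := by
  have hb : ((b : K) + 1) ≠ 0 := by
    exact_mod_cast cast_ne_zero_of_cast_factorial_ne_zero h b.succ_pos (by omega)
  rw [lamK_natCast_eq h, ← choose_symm_of_eq_add (add_assoc a b 1),
    cast_choose_left_eq_mul_factorialRatio h, cast_choose_eq_mul_factorialRatio h]
  field_simp
  ring

lemma wittN_mul_lamK_cocycle {i j k : ℕ} (h : ((i + j + k + 1)! : K) ≠ 0) :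
    wittN K i j * lamK K (i + j) k - wittN K j k * lamK K i (j + k)
      + wittN K i k * lamK K j (i + k) + wittN K (j + k) i * lamK K j k
        - wittN K (i + k) j * lamK K i k = 0 := by
  have hf : ∀ n ≤ i + j + k + 1, (n ! : K) ≠ 0 := fun _ hn => cast_factorial_ne_zero_of_le h hn
  simp only [← Nat.cast_add]
  rw [wittN_natCast_eq (hf _ (by omega)), wittN_natCast_eq (hf _ (by omega)),
    wittN_natCast_eq (hf _ (by omega)), wittN_natCast_eq (hf _ (by omega)),
    wittN_natCast_eq (hf _ (by omega)),
    lamK_natCast_eq_factorialRatio (hf _ (by omega)),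
    lamK_natCast_eq_factorialRatio (hf _ (by omega)),
    lamK_natCast_eq_factorialRatio (hf _ (by omega)),
    lamK_natCast_eq_factorialRatio (hf _ (by omega)),
    lamK_natCast_eq_factorialRatio (hf _ (by omega))]
  simp only [factorialRatio]
  rw [show i + (j + k) = i + j + k by ring, show j + (i + k) = i + j + k by ring,
    show j + k + i = i + j + k by ring, show i + k + j = i + j + k by ring]
  field_simp [hf (i + 1) (by omega), hf (j + 1) (by omega), hf (k + 1) (by omega),
    hf (i + j + 1) (by omega), hf (j + k + 1) (by omega), hf (i + k + 1) (by omega)]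
  push_cast
  ring

end Cocycle

end WittLambda

open WittLambda

theorem statement12
    (K : Type) [Field K] (p : ℕ) [CharP K p] (hp : 3 < p) :
    (∀ j k : ℤ, 1 ≤ j → 1 ≤ k → j + k = (p : ℤ) - 1 →
      lamK K (j - 1) k + lamK K j (k - 1) =
        (-1 : K) ^ k * (2 * (k : K) + 1) * ((k : K) * ((k : K) + 1))⁻¹) ∧
    (∀ j k : ℤ, 1 ≤ j → 1 ≤ k → j + k = (p : ℤ) - 1 →
      lamK K j (k - 1) - lamK K k (j - 1) =
        2 * (-1 : K) ^ k * lamK K j (-1) + 2 * (-1 : K) ^ (k + 1) * lamK K k (-1)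
          + (-1 : K) ^ (k + 1) * (2 * (k : K) + 1) * ((k : K) * ((k : K) + 1))⁻¹) ∧
    (∀ i j k : ℤ, 0 ≤ i → 0 ≤ j → 0 ≤ k → i + j + k < (p : ℤ) - 1 →
      wittN K i j * lamK K (i + j) k - wittN K j k * lamK K i (j + k)
        + wittN K i k * lamK K j (i + k) + wittN K (j + k) i * lamK K j k
          - wittN K (i + k) j * lamK K i k = 0) := by
  have hprime : p.Prime := (CharP.char_is_prime_or_zero K p).resolve_right (by omega)
  refine ⟨lamK_sub_one_add_lamK_sub_one hprime (by omega),
    lamK_sub_one_sub_lamK_sub_one hprime (by omega), fun i j k hi hj hk hijk => ?_⟩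
  lift i to ℕ using hi
  lift j to ℕ using hj
  lift k to ℕ using hk
  exact wittN_mul_lamK_cocycle (cast_factorial_ne_zero_of_lt hprime (by omega))
end

section
/- Let K be a field of characteristic p > 3. With λ_{ij} = Σ_{k=1}^{i} binom(i+j+1−k, j+1)·(k+2)·(k(k+1))^{−1} ∈ K, one has λ_{ij} = (−1)^j (2j+1)·(j(j+1))^{−1} for all integers i, j ≥ 1 with i + j = p − 1; moreover λ_{p−2,0} = 0. -/
open Finset Polynomial
open scoped Nat

theorem natCast_ne_zero_of_lt {R : Type*} [AddGroupWithOne R] (p : ℕ) [CharP R p] {n : ℕ}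
    (hn : 0 < n) (hnp : n < p) : (n : R) ≠ 0 := by
  rw [Ne, CharP.cast_eq_zero_iff R p]
  exact fun h => (Nat.le_of_dvd hn h).not_gt hnp

theorem cast_sub_eq_neg {R : Type*} [AddGroupWithOne R] (p : ℕ) [CharP R p] {n : ℕ}
    (hn : n ≤ p) : ((p - n : ℕ) : R) = -n := by
  rw [Nat.cast_sub hn, CharP.cast_eq_zero, zero_sub]

theorem cast_choose_sub_succ {K : Type*} [Field K] (p : ℕ) [CharP K p] {k r : ℕ}
    (hk : k < p) (hr : r < p) :
    ((p - (k + 1)).choose r : K) = (-1) ^ r * ((k + r).choose r : K) := by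
  have hp : p.Prime := CharP.char_prime_of_ne_zero K (by omega)
  have hfact : (r ! : K) ≠ 0 := by
    rw [Ne, CharP.cast_eq_zero_iff K p, hp.dvd_factorial]; omega
  apply mul_left_cancel₀ hfact
  calc (r ! : K) * (p - (k + 1)).choose r
      = (descPochhammer K r).eval ((p - (k + 1) : ℕ) : K) := by
        rw [descPochhammer_eval_eq_descFactorial, Nat.descFactorial_eq_factorial_mul_choose]
        push_cast; rfl
    _ = (ascPochhammer K r).eval (-((k + r : ℕ) : K)) := by
        rw [descPochhammer_eval_eq_ascPochhammer, cast_sub_eq_neg p (by omega)]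
        push_cast; ring_nf
    _ = (-1) ^ r * (descPochhammer K r).eval ((k + r : ℕ) : K) :=
        ascPochhammer_eval_neg_eq_descPochhammer K _ r
    _ = (r ! : K) * ((-1) ^ r * (k + r).choose r) := by
        rw [descPochhammer_eval_eq_descFactorial, Nat.descFactorial_eq_factorial_mul_choose]
        push_cast; ring

theorem sum_range_inv_succ_eq_zero {K : Type*} [Field K] (p : ℕ) [CharP K p] (hp : p ≠ 2) :
    ∑ k ∈ range (p - 1), ((k : K) + 1)⁻¹ = 0 := by
  have h2 : (2 : K) ≠ 0 := Ring.two_ne_zero (by rwa [ringChar.eq K p])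
  have hreflect := sum_range_reflect (fun k => ((k : K) + 1)⁻¹) (p - 1)
  have hneg : ∀ k ∈ range (p - 1), ((p - 1 - 1 - k : ℕ) + 1 : K)⁻¹ = -((k : K) + 1)⁻¹ := by
    intro k hk
    rw [mem_range] at hk
    rw [show p - 1 - 1 - k = p - (k + 2) by omega, cast_sub_eq_neg p (by omega), ← inv_neg]
    push_cast; ring_nf
  rw [sum_congr rfl hneg, sum_neg_distrib, neg_eq_iff_add_eq_zero, ← two_mul] at hreflect
  exact (mul_eq_zero.mp hreflect).resolve_left h2

def lamPrimitive (j m : ℕ) : ℕ :=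
  j * (m + j + 1).choose (j + 1) + (m + j + 1).choose j

theorem lamPrimitive_zero (j : ℕ) : lamPrimitive j 0 = 2 * j + 1 := by
  simp only [lamPrimitive, zero_add, Nat.choose_self, Nat.choose_succ_self_right]
  ring

theorem lamPrimitive_succ (j k : ℕ) :
    (k + j + 1).choose (j + 1) * (k + 3) * (j * (j + 1)) + (k + 1) * (k + 2) * lamPrimitive j k
      = (k + 1) * (k + 2) * lamPrimitive j (k + 1) := by
  have hpascal := Nat.choose_succ_succ' (k + j + 1) j
  have hlow := Nat.choose_succ_right_eq (k + j + 1) j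
  have hup := Nat.choose_mul_succ_eq (k + j + 1) j
  rw [show k + j + 1 - j = k + 1 by omega] at hlow
  rw [show k + j + 1 + 1 - j = k + 2 by omega] at hup
  simp only [lamPrimitive, show k + 1 + j + 1 = k + j + 1 + 1 by omega, hpascal]
  zify at hlow hup ⊢
  linear_combination (k + 3 : ℤ) * j * hlow + (k + 1 : ℤ) * hup

theorem dvd_lamPrimitive {j m : ℕ} (hp : (m + j + 1).Prime) (hj : 0 < j) (hm : 0 < m) :
    m + j + 1 ∣ lamPrimitive j m :=
  dvd_add (dvd_mul_of_dvd_right (hp.dvd_choose_self (by omega) (by omega)) _)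
    (hp.dvd_choose_self (by omega) (by omega))

theorem sum_range_mul_eq_lamPrimitive_sub {K : Type*} [Field K] (j m : ℕ)
    (hm : ∀ k < m, ((k : K) + 1) * ((k : K) + 2) ≠ 0) :
    (∑ k ∈ range m, ((k + j + 1).choose (j + 1) : K) * ((k : K) + 3)
        * (((k : K) + 1) * ((k : K) + 2))⁻¹) * (j * (j + 1))
      = lamPrimitive j m - lamPrimitive j 0 := by
  rw [sum_mul, ← sum_range_sub (fun m => (lamPrimitive j m : K))]
  refine sum_congr rfl fun k hk => ?_
  obtain ⟨hk1, hk2⟩ := mul_ne_zero_iff.mp (hm k (mem_range.mp hk))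
  have hstep : (((k + j + 1).choose (j + 1) * (k + 3) * (j * (j + 1))
      + (k + 1) * (k + 2) * lamPrimitive j k : ℕ) : K)
        = ((k + 1) * (k + 2) * lamPrimitive j (k + 1) : ℕ) := by
    rw [lamPrimitive_succ]
  push_cast at hstep
  field_simp
  linear_combination hstep

theorem lamK_natCast (K : Type) [Field K] (i j : ℕ) :
    lamK K i j = ∑ k ∈ range i, ((i + j - k).choose (j + 1) : K) * ((k : K) + 3)
      * (((k : K) + 1) * ((k : K) + 2))⁻¹ := by
  rw [lamK, eq_comm]
  refine sum_nbij' (fun k => (k + 1 : ℤ)) (fun k => (k - 1).toNat) ?_ ?_ ?_ ?_ ?_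
  all_goals intro k hk; simp only [mem_Icc, mem_range] at hk ⊢
  any_goals omega
  rw [chK, if_neg (by omega), show (i + j + 1 - (k + 1) : ℤ).toNat = i + j - k by omega,
    show (j + 1 : ℤ).toNat = j + 1 by omega]
  push_cast
  ring

theorem lamK_of_add_add_one_eq (K : Type) [Field K] (p : ℕ) [CharP K p] {i j : ℕ}
    (hi : 0 < i) (hj : 0 < j) (hp : i + j + 1 = p) :
    lamK K i j = (-1) ^ j * (2 * (j : K) + 1) * ((j : K) * ((j : K) + 1))⁻¹ := by
  have hprime : p.Prime := CharP.char_prime_of_ne_zero K (by omega)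
  have hne (n : ℕ) (hn : 0 < n) (hnp : n < p) : (n : K) ≠ 0 := natCast_ne_zero_of_lt p hn hnp
  have hsum := sum_range_mul_eq_lamPrimitive_sub (K := K) j i fun k hk =>
    mul_ne_zero (by exact_mod_cast hne (k + 1) (by omega) (by omega))
      (by exact_mod_cast hne (k + 2) (by omega) (by omega))
  have hsign : lamK K i j = (-1) ^ (j + 1) * ∑ k ∈ range i,
      ((k + j + 1).choose (j + 1) : K) * ((k : K) + 3) * (((k : K) + 1) * ((k : K) + 2))⁻¹ := by
    rw [lamK_natCast, mul_sum]
    refine sum_congr rfl fun k hk => ?_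
    have hk := mem_range.mp hk
    rw [show i + j - k = p - (k + 1) by omega, cast_choose_sub_succ p (by omega) (by omega),
      ← add_assoc]
    ring
  have hvanish : (lamPrimitive j i : K) = 0 := by
    rw [CharP.cast_eq_zero_iff K p, ← hp]
    exact dvd_lamPrimitive (hp ▸ hprime) hj hi
  rw [hvanish, lamPrimitive_zero] at hsum
  have hj0 := hne j hj (by omega)
  have hj1 : (j : K) + 1 ≠ 0 := by exact_mod_cast hne (j + 1) (by omega) (by omega)
  push_cast at hsum
  rw [hsign, pow_succ, eq_mul_inv_iff_mul_eq₀ (mul_ne_zero hj0 hj1)]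
  linear_combination -(-1 : K) ^ j * hsum

theorem lamK_char_sub_two_zero (K : Type) [Field K] (p : ℕ) [CharP K p] (hp : 2 < p) :
    lamK K ((p : ℤ) - 2) 0 = 0 := by
  have hne (n : ℕ) (hn : 0 < n) (hnp : n < p) : (n : K) ≠ 0 := natCast_ne_zero_of_lt p hn hnp
  have hterm : ∀ k ∈ range (p - 2), ((p - 2 + 0 - k).choose (0 + 1) : K) * ((k : K) + 3)
      * (((k : K) + 1) * ((k : K) + 2))⁻¹ = -1 - 2 * ((k : K) + 1)⁻¹ := by
    intro k hk
    have hk := mem_range.mp hk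
    have hk1 : (k : K) + 1 ≠ 0 := by exact_mod_cast hne (k + 1) (by omega) (by omega)
    have hk2 : (k : K) + 2 ≠ 0 := by exact_mod_cast hne (k + 2) (by omega) (by omega)
    rw [zero_add, Nat.choose_one_right, show p - 2 + 0 - k = p - (k + 2) by omega,
      cast_sub_eq_neg p (by omega)]
    field_simp
    push_cast
    ring
  have hharmonic : ∑ k ∈ range (p - 2), ((k : K) + 1)⁻¹ = 1 := by
    have h := sum_range_inv_succ_eq_zero (K := K) p (by omega)
    rw [show p - 1 = p - 2 + 1 by omega, sum_range_succ, cast_sub_eq_neg p (by omega)] at h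
    norm_num at h
    linear_combination h
  have hlen : ((p - 2 : ℕ) : K) = -2 := by rw [cast_sub_eq_neg p (by omega)]; norm_num
  have h := lamK_natCast K (p - 2) 0
  rw [Nat.cast_zero] at h
  rw [show (p : ℤ) - 2 = ((p - 2 : ℕ) : ℤ) by omega, h, sum_congr rfl hterm, sum_sub_distrib,
    ← mul_sum, hharmonic, sum_const, card_range, nsmul_eq_mul, hlen]
  ring

theorem statement13
    (K : Type) [Field K] (p : ℕ) [CharP K p] (hp : 3 < p) :
    (∀ i j : ℤ, 1 ≤ i → 1 ≤ j → i + j = (p : ℤ) - 1 →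
      lamK K i j = (-1 : K) ^ j * (2 * (j : K) + 1) * ((j : K) * ((j : K) + 1))⁻¹) ∧
    lamK K ((p : ℤ) - 2) 0 = 0 := by
  refine ⟨fun i j hi hj hij => ?_, lamK_char_sub_two_zero K p (by omega)⟩
  lift i to ℕ using (by omega)
  lift j to ℕ using (by omega)
  rw [lamK_of_add_add_one_eq K p (by omega) (by omega) (by omega), zpow_natCast, Int.cast_natCast]
end
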